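/- One step of the UnifDiag iteration strictly decreases the number of diagonal entries differing from τ: if Σ is symmetric with Σ_{j,j} < τ < Σ_{i,i} for some i ≠ j, then there is a Givens rotation G(i,j,θ) such that Σ' = G(i,j,θ) Σ G(i,j,θ)ᵀ satisfies Σ'_{j,j} = τ, Σ'_{k,k} = Σ_{k,k} for k ∉ {i,j}, and Σ'_{i,i} = Σ_{i,i} + Σ_{j,j} - τ; hence #{k : Σ'_{k,k} ≠ τ} ≤ #{k : Σ_{k,k} ≠ τ} − 1. -/
import Mathlib


open Matrix

noncomputable def givens (c : ℕ) (i j : Fin c) (θ : ℝ) : Matrix (Fin c) (Fin c) ℝ :=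
  fun k l =>
    if k = l then (if k = i ∨ k = j then Real.cos θ else 1)
    else if k = i ∧ l = j then Real.sin θ
    else if k = j ∧ l = i then -Real.sin θ
    else 0

lemma givens_row_sum (c : ℕ) (i j : Fin c) (hij : i ≠ j) (θ : ℝ) (a : Fin c)
    (v : Fin c → ℝ) :
    ∑ k, givens c i j θ a k * v k =
      if a = i then Real.cos θ * v i + Real.sin θ * v j
      else if a = j then Real.cos θ * v j - Real.sin θ * v i
      else v a := by
  by_cases hai : a = i
  · subst hai
    rw [if_pos rfl]
    have hv : ∀ k, givens c a j θ a k * v k =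
        (if k = a then Real.cos θ * v a else 0) + (if k = j then Real.sin θ * v j else 0) := by
      intro k
      by_cases h1 : k = a
      · subst h1; simp [givens, hij]
      · by_cases h2 : k = j
        · subst h2; simp [givens, Ne.symm h1, h1]
        · simp [givens, Ne.symm h1, h1, h2]
    rw [Finset.sum_congr rfl fun k _ => hv k, Finset.sum_add_distrib,
      Finset.sum_ite_eq' Finset.univ a, Finset.sum_ite_eq' Finset.univ j]
    simp
  · rw [if_neg hai]
    by_cases haj : a = j
    · subst haj
      rw [if_pos rfl]
      have hv : ∀ k, givens c i a θ a k * v k =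
          (if k = a then Real.cos θ * v a else 0) + (if k = i then -(Real.sin θ * v i) else 0) := by
        intro k
        by_cases h1 : k = a
        · subst h1; simp [givens, hai, Ne.symm hij]
        · by_cases h2 : k = i
          · subst h2; simp [givens, Ne.symm h1, h1, hai]
          · simp [givens, Ne.symm h1, h1, h2]
      rw [Finset.sum_congr rfl fun k _ => hv k, Finset.sum_add_distrib,
        Finset.sum_ite_eq' Finset.univ a, Finset.sum_ite_eq' Finset.univ i]
      simp
      ring
    · rw [if_neg haj]
      have hv : ∀ k, givens c i j θ a k * v k = (if k = a then v a else 0) := by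
        intro k
        by_cases h1 : k = a
        · subst h1; simp [givens, hai, haj]
        · simp [givens, Ne.symm h1, h1, hai, haj]
      rw [Finset.sum_congr rfl fun k _ => hv k, Finset.sum_ite_eq' Finset.univ a]
      simp

lemma mulS_apply (c : ℕ) (i j : Fin c) (hij : i ≠ j) (θ : ℝ)
    (S : Matrix (Fin c) (Fin c) ℝ) (a b : Fin c) :
    (givens c i j θ * S) a b =
      if a = i then Real.cos θ * S i b + Real.sin θ * S j b
      else if a = j then Real.cos θ * S j b - Real.sin θ * S i b
      else S a b := by
  rw [Matrix.mul_apply, givens_row_sum c i j hij θ a (fun k => S k b)]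

lemma conj_apply (c : ℕ) (i j : Fin c) (hij : i ≠ j) (θ : ℝ)
    (S : Matrix (Fin c) (Fin c) ℝ) (a b : Fin c) :
    (givens c i j θ * S * (givens c i j θ)ᵀ) a b =
      if b = i then Real.cos θ * ((givens c i j θ * S) a i) + Real.sin θ * ((givens c i j θ * S) a j)
      else if b = j then Real.cos θ * ((givens c i j θ * S) a j) - Real.sin θ * ((givens c i j θ * S) a i)
      else (givens c i j θ * S) a b := by
  rw [Matrix.mul_apply]
  have h : ∀ l, (givens c i j θ * S) a l * (givens c i j θ)ᵀ l b
      = givens c i j θ b l * (givens c i j θ * S) a l := by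
    intro l; rw [Matrix.transpose_apply, mul_comm]
  rw [Finset.sum_congr rfl fun l _ => h l, givens_row_sum c i j hij θ b]

theorem stmt14 (c : ℕ) (S : Matrix (Fin c) (Fin c) ℝ) (hS : S.IsSymm)
    (τ : ℝ) (i j : Fin c) (hij : i ≠ j)
    (hj : S j j < τ) (hi : τ < S i i) :
    ∃ θ : ℝ,
      (givens c i j θ * S * (givens c i j θ)ᵀ) j j = τ ∧
      (∀ k : Fin c, k ≠ i → k ≠ j →
        (givens c i j θ * S * (givens c i j θ)ᵀ) k k = S k k) ∧
      (givens c i j θ * S * (givens c i j θ)ᵀ) i i = S i i + S j j - τ ∧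
      (Finset.univ.filter
          fun k => (givens c i j θ * S * (givens c i j θ)ᵀ) k k ≠ τ).card ≤
        (Finset.univ.filter fun k => S k k ≠ τ).card - 1 := by
  have hsymm : S i j = S j i := by
    have h := congrFun (congrFun hS i) j
    simpa [Matrix.transpose_apply] using h.symm
  have hcont : ContinuousOn (fun θ : ℝ =>
      Real.cos θ ^ 2 * S j j + Real.sin θ ^ 2 * S i i
        - 2 * Real.sin θ * Real.cos θ * S i j) (Set.Icc 0 (Real.pi / 2)) := by
    apply Continuous.continuousOn; fun_prop
  have h2 : (0:ℝ) ≤ Real.pi / 2 := by positivity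
  have hmem : τ ∈ Set.Icc
      ((fun θ : ℝ => Real.cos θ ^ 2 * S j j + Real.sin θ ^ 2 * S i i
        - 2 * Real.sin θ * Real.cos θ * S i j) 0)
      ((fun θ : ℝ => Real.cos θ ^ 2 * S j j + Real.sin θ ^ 2 * S i i
        - 2 * Real.sin θ * Real.cos θ * S i j) (Real.pi / 2)) := by
    constructor <;> simp <;> [exact le_of_lt hj; exact le_of_lt hi]
  obtain ⟨θ, -, hθ⟩ := intermediate_value_Icc h2 hcont hmem
  simp only at hθ
  have hsc := Real.sin_sq_add_cos_sq θ
  have hjj : (givens c i j θ * S * (givens c i j θ)ᵀ) j j = τ := by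
    rw [conj_apply c i j hij θ S, if_neg hij.symm, if_pos rfl,
      mulS_apply c i j hij θ S j j, mulS_apply c i j hij θ S j i,
      if_neg hij.symm, if_pos rfl, if_neg hij.symm, if_pos rfl, ← hθ]
    linear_combination (Real.sin θ * Real.cos θ) * hsymm
  have hoth : ∀ k : Fin c, k ≠ i → k ≠ j →
      (givens c i j θ * S * (givens c i j θ)ᵀ) k k = S k k := by
    intro k hki hkj
    rw [conj_apply c i j hij θ S, if_neg hki, if_neg hkj,
      mulS_apply c i j hij θ S k k, if_neg hki, if_neg hkj]
  have hii : (givens c i j θ * S * (givens c i j θ)ᵀ) i i = S i i + S j j - τ := by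
    rw [conj_apply c i j hij θ S, if_pos rfl,
      mulS_apply c i j hij θ S i i, mulS_apply c i j hij θ S i j,
      if_pos rfl, if_pos rfl, ← hθ]
    linear_combination (S i i + S j j) * hsc - (Real.sin θ * Real.cos θ) * hsymm
  refine ⟨θ, hjj, hoth, hii, ?_⟩
  have hsub : (Finset.univ.filter
      fun k => (givens c i j θ * S * (givens c i j θ)ᵀ) k k ≠ τ) ⊆
      (Finset.univ.filter fun k => S k k ≠ τ).erase j := by
    intro k hk
    rw [Finset.mem_filter] at hk
    have hk' := hk.2
    have hkj : k ≠ j := by rintro rfl; exact hk' hjj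
    rw [Finset.mem_erase]
    refine ⟨hkj, Finset.mem_filter.mpr ⟨Finset.mem_univ _, ?_⟩⟩
    by_cases hki : k = i
    · subst hki; exact ne_of_gt hi
    · rw [← hoth k hki hkj]; exact hk'
  have hjmem : j ∈ Finset.univ.filter fun k => S k k ≠ τ :=
    Finset.mem_filter.mpr ⟨Finset.mem_univ _, ne_of_lt hj⟩
  calc (Finset.univ.filter
      fun k => (givens c i j θ * S * (givens c i j θ)ᵀ) k k ≠ τ).card
      ≤ ((Finset.univ.filter fun k => S k k ≠ τ).erase j).card :=
        Finset.card_le_card hsub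
    _ = (Finset.univ.filter fun k => S k k ≠ τ).card - 1 :=
        Finset.card_erase_of_mem hjmem
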